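/- Let Λ be a row-finite k-graph with no sources, R a commutative ring with 1, and let a be a nonzero element of the center Z(KP_R(Λ)) written in normal form a = ∑_{(α,β)∈F} r_{α,β} s_α s_{β*}. Then there exist l ∈ ℕ∖{0} and pairs (α_1,β_1), …, (α_l,β_l) ∈ F such that the composition β_1β_2⋯β_l is defined and is a closed path in Λ (i.e., r(β_1⋯β_l) = s(β_1⋯β_l)). -/

import Mathlib

/-! If `a` is central and `a p_v ≠ 0` for a vertex `v`, then by (KP4) `a s_λ ≠ 0` for some
`λ ∈ vΛ^m`; by (KP3) only the terms of the normal form with `β = λ` survive in `a s_λ`, so `λ`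
is one of the `β`'s, and centrality gives `a s_λ = s_λ (a p_{s(λ)})`, so `a p_{s(λ)} ≠ 0`.
Starting from a vertex with `a p_v ≠ 0` (one exists since `a = a ∑_v p_v`), this produces an
infinite chain `β_1 β_2 ⋯` of composable paths from the finite set `F`, which must repeat. -/

/-- A `k`-graph: a countable category `Λ` together with a degree functor
`d : Λ → ℕ^k` satisfying the unique factorization property.  The elements of
`Path` are the morphisms ("paths"); the objects are identified with the paths
of degree `0` (the "vertices"), and `r`, `s` assign to a path the identity
morphism at its range and source object.  Composition `comp p q` is only
meaningful when `s p = r q`. -/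
structure KGraph (k : ℕ) where
  Path : Type
  countable : Countable Path
  r : Path → Path
  s : Path → Path
  d : Path → (Fin k → ℕ)
  comp : Path → Path → Path
  d_r : ∀ p, d (r p) = 0
  d_s : ∀ p, d (s p) = 0
  r_of_deg_zero : ∀ p, d p = 0 → r p = p
  s_of_deg_zero : ∀ p, d p = 0 → s p = p
  r_comp : ∀ p q, s p = r q → r (comp p q) = r p
  s_comp : ∀ p q, s p = r q → s (comp p q) = s q
  d_comp : ∀ p q, s p = r q → d (comp p q) = d p + d q
  comp_assoc : ∀ p q t, s p = r q → s q = r t →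
    comp (comp p q) t = comp p (comp q t)
  id_comp : ∀ p, comp (r p) p = p
  comp_id : ∀ p, comp p (s p) = p
  factor : ∀ (p : Path) (m n : Fin k → ℕ), d p = m + n →
    ∃! μν : Path × Path, d μν.1 = m ∧ d μν.2 = n ∧ s μν.1 = r μν.2 ∧
      comp μν.1 μν.2 = p

namespace KGraph

variable {k : ℕ} (Λ : KGraph k)

/-- A vertex is a path of degree `0`. -/
def IsVertex (v : Λ.Path) : Prop := Λ.d v = 0

/-- `Λ` is row-finite if `vΛ^n` is finite for every vertex `v` and `n ∈ ℕ^k`. -/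
def RowFinite : Prop :=
  ∀ v, Λ.d v = 0 → ∀ n : Fin k → ℕ, {p : Λ.Path | Λ.r p = v ∧ Λ.d p = n}.Finite

/-- `Λ` has no sources if `vΛ^n ≠ ∅` for every vertex `v` and `n ∈ ℕ^k`. -/
def NoSources : Prop :=
  ∀ v, Λ.d v = 0 → ∀ n : Fin k → ℕ, ∃ p, Λ.r p = v ∧ Λ.d p = n

open Classical in
/-- `Λ.seg lam p q` is the middle segment `lam(p,q)`: whenever `p ≤ q ≤ d lam`,
it is the unique path `μ` of degree `q - p` arising in a factorization
`lam = α μ β` with `d α = p` (unique by the factorization property). -/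
noncomputable def seg (lam : Λ.Path) (p q : Fin k → ℕ) : Λ.Path :=
  if h : ∃ μ, ∃ α β, Λ.d α = p ∧ Λ.d μ = q - p ∧ Λ.s α = Λ.r μ ∧
      Λ.s μ = Λ.r β ∧ Λ.comp α (Λ.comp μ β) = lam then h.choose else lam

/-- Aperiodicity, in the formulation of [RS07, Lemma 3.2(iv)]. -/
def Aperiodic : Prop :=
  ∀ v, Λ.d v = 0 → ∀ m n : Fin k → ℕ, m ≠ n →
    ∃ lam, Λ.r lam = v ∧ m ⊔ n ≤ Λ.d lam ∧
      Λ.seg lam m (m + Λ.d lam - (m ⊔ n)) ≠ Λ.seg lam n (n + Λ.d lam - (m ⊔ n))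

/-- An infinite path: a degree-preserving functor `x : Ω_k → Λ`, recorded by
its segments `x.seg m n` (of degree `n - m`) for `m ≤ n`; `x.seg m m` is the
vertex `x(m)`. -/
structure InfinitePath (Λ : KGraph k) where
  seg : (Fin k → ℕ) → (Fin k → ℕ) → Λ.Path
  d_seg : ∀ m n, m ≤ n → Λ.d (seg m n) = n - m
  r_seg : ∀ m n, m ≤ n → Λ.r (seg m n) = seg m m
  s_seg : ∀ m n, m ≤ n → Λ.s (seg m n) = seg n n
  comp_seg : ∀ m n q, m ≤ n → n ≤ q → Λ.comp (seg m n) (seg n q) = seg m q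

/-- `Λ` is cofinal if for every infinite path `x` and vertex `v` there is
`m ∈ ℕ^k` with `vΛx(m) ≠ ∅`. -/
def Cofinal : Prop :=
  ∀ x : InfinitePath Λ, ∀ v, Λ.d v = 0 →
    ∃ m : Fin k → ℕ, ∃ lam, Λ.r lam = v ∧ Λ.s lam = x.seg m m

/-- A Kumjian-Pask `Λ`-family in a (not necessarily unital) ring `A`.  Here
`S p` plays the role of `s_p` and `S' p` the role of the ghost element
`s_{p*}`, with the convention `S v = S' v = p_v` for vertices `v`. -/
structure IsKPFamily {A : Type*} [NonUnitalRing A] (S S' : Λ.Path → A) : Prop where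
  /-- for a vertex `v`, both `S v` and `S' v` denote `p_v` -/
  vertex_eq : ∀ v, Λ.d v = 0 → S' v = S v
  /-- (KP1): the `p_v` are mutually orthogonal idempotents -/
  orthogonal : ∀ u v, Λ.d u = 0 → Λ.d v = 0 →
    (u = v → S u * S v = S u) ∧ (u ≠ v → S u * S v = 0)
  /-- (KP2): `S_p S_q = S_{pq}` (this also subsumes the unit laws
  `P_{r p} S_p = S_p = S_p P_{s p}`, via `id_comp` and `comp_id`) -/
  mul_comp : ∀ p q, Λ.s p = Λ.r q → S p * S q = S (Λ.comp p q)
  /-- (KP2) for ghost paths: `S_{q*} S_{p*} = S_{(pq)*}` -/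
  ghost_mul_comp : ∀ p q, Λ.s p = Λ.r q → S' q * S' p = S' (Λ.comp p q)
  /-- (KP3): `S_{p*} S_q = δ_{p,q} P_{s p}` for `d p = d q` -/
  kp3 : ∀ p q, Λ.d p = Λ.d q →
    (p = q → S' p * S q = S (Λ.s p)) ∧ (p ≠ q → S' p * S q = 0)
  /-- (KP4): `P_v = ∑_{p ∈ vΛ^n} S_p S_{p*}` for every vertex `v` and `n ≠ 0` -/
  kp4 : ∀ v, Λ.d v = 0 → ∀ n : Fin k → ℕ, n ≠ 0 → ∀ T : Finset Λ.Path,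
    (∀ p, p ∈ T ↔ (Λ.r p = v ∧ Λ.d p = n)) → S v = ∑ p ∈ T, S p * S' p

end KGraph

/-- `(A, S, S')` is *the* Kumjian-Pask algebra `KP_R(Λ)`: `(S, S')` is a
Kumjian-Pask `Λ`-family in the `R`-algebra `A` with `r • p_v ≠ 0` for all
`r ≠ 0` (so in particular the family is nonzero), and `A` has the universal
property: every Kumjian-Pask `Λ`-family in an `R`-algebra `B` is the image of
`(S, S')` under a unique `R`-algebra homomorphism. -/
structure IsKumjianPaskAlgebra (R : Type*) [CommRing R] {k : ℕ} (Λ : KGraph k)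
    (A : Type*) [NonUnitalRing A] [Module R A] [SMulCommClass R A A]
    [IsScalarTower R A A] (S S' : Λ.Path → A) : Prop where
  isFamily : Λ.IsKPFamily S S'
  smul_vertex_ne_zero : ∀ v, Λ.d v = 0 → ∀ r : R, r ≠ 0 → r • S v ≠ 0
  universal : ∀ (B : Type*) [NonUnitalRing B] [Module R B] [SMulCommClass R B B]
    [IsScalarTower R B B] (T T' : Λ.Path → B), Λ.IsKPFamily T T' →
    ∃! φ : A →ₙₐ[R] B, (∀ p, φ (S p) = T p) ∧ ∀ p, φ (S' p) = T' p

variable {k : ℕ}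

theorem exists_closed_chain_of_chain {α ι : Type*} {F : Finset ι} {r s : ι → α}
    (y : ℕ → ι) (hyF : ∀ n, y n ∈ F) (hy : ∀ n, s (y n) = r (y (n + 1))) :
    ∃ l : ℕ, ∃ hl : 0 < l, ∃ g : Fin l → ι,
      (∀ i, g i ∈ F) ∧
      (∀ i : ℕ, ∀ h : i + 1 < l, s (g ⟨i, Nat.lt_of_succ_lt h⟩) = r (g ⟨i + 1, h⟩)) ∧
      r (g ⟨0, hl⟩) = s (g ⟨l - 1, Nat.sub_lt hl Nat.one_pos⟩) := by
  obtain ⟨i, j, hij, hyij⟩ := F.finite_toSet.exists_lt_map_eq_of_forall_mem hyF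
  refine ⟨j - i, Nat.sub_pos_of_lt hij, fun t => y (i + t), fun t => hyF _,
    fun t _ => hy (i + t), ?_⟩
  have hj : i + (j - i - 1) + 1 = j := by omega
  simp only [Nat.add_zero, hyij, hy, hj]

theorem exists_closed_chain_of_forall_exists_mem {α ι : Type*} {F : Finset ι} {r s : ι → α}
    {P : α → Prop} (hstep : ∀ v, P v → ∃ y ∈ F, r y = v ∧ P (s y)) {v₀ : α} (hv₀ : P v₀) :
    ∃ l : ℕ, ∃ hl : 0 < l, ∃ g : Fin l → ι,
      (∀ i, g i ∈ F) ∧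
      (∀ i : ℕ, ∀ h : i + 1 < l, s (g ⟨i, Nat.lt_of_succ_lt h⟩) = r (g ⟨i + 1, h⟩)) ∧
      r (g ⟨0, hl⟩) = s (g ⟨l - 1, Nat.sub_lt hl Nat.one_pos⟩) := by
  have : Nonempty ι := let ⟨y, _⟩ := hstep v₀ hv₀; ⟨y⟩
  choose! next hnextF hnextr hnextP using hstep
  let v : ℕ → α := fun n => (s ∘ next)^[n] v₀
  have hv : ∀ n, P (v n) := by
    intro n
    induction n with
    | zero => exact hv₀
    | succ n ih =>
      simpa only [v, Function.iterate_succ_apply', Function.comp_apply] using hnextP _ ih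
  refine exists_closed_chain_of_chain (fun n => next (v n)) (fun n => hnextF _ (hv n)) fun n => ?_
  rw [hnextr _ (hv (n + 1))]
  simp only [v, Function.iterate_succ_apply', Function.comp_apply]

namespace KGraph.IsKPFamily

variable {Λ : KGraph k} {A : Type*} [NonUnitalRing A] {S S' : Λ.Path → A}

theorem mul_vertex_source (hf : Λ.IsKPFamily S S') (p : Λ.Path) : S p * S (Λ.s p) = S p := by
  rw [hf.mul_comp p _ (Λ.r_of_deg_zero _ (Λ.d_s p)).symm, Λ.comp_id]

theorem ghost_mul_vertex_range (hf : Λ.IsKPFamily S S') (β : Λ.Path) :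
    S' β * S (Λ.r β) = S' β := by
  rw [← hf.vertex_eq _ (Λ.d_r β), hf.ghost_mul_comp _ β (Λ.s_of_deg_zero _ (Λ.d_r β)),
    Λ.id_comp]

theorem ghost_mul_vertex_of_ne (hf : Λ.IsKPFamily S S') {β v : Λ.Path} (hv : Λ.d v = 0)
    (hβv : Λ.r β ≠ v) : S' β * S v = 0 := by
  rw [← hf.ghost_mul_vertex_range β, mul_assoc, (hf.orthogonal _ _ (Λ.d_r β) hv).2 hβv, mul_zero]

theorem exists_path_mul_ne_zero (hf : Λ.IsKPFamily S S') (hrow : Λ.RowFinite) {a : A}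
    {v : Λ.Path} (hv : Λ.d v = 0) (n : Fin k → ℕ) (hav : a * S v ≠ 0) :
    ∃ p, Λ.r p = v ∧ Λ.d p = n ∧ a * S p ≠ 0 := by
  rcases eq_or_ne n 0 with rfl | hn
  · exact ⟨v, Λ.r_of_deg_zero v hv, hv, hav⟩
  set T := (hrow v hv n).toFinset
  have hT : ∀ p, p ∈ T ↔ Λ.r p = v ∧ Λ.d p = n := fun p => Set.Finite.mem_toFinset _
  by_contra! h
  refine hav ?_
  rw [hf.kp4 v hv n hn T hT, Finset.mul_sum]
  refine Finset.sum_eq_zero fun p hp => ?_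
  obtain ⟨hpv, hpn⟩ := (hT p).1 hp
  rw [← mul_assoc, h p hpv hpn, zero_mul]

theorem mul_vertex_source_ne_zero (hf : Λ.IsKPFamily S S') {a : A} (hcen : ∀ b, a * b = b * a)
    {p : Λ.Path} (hap : a * S p ≠ 0) : a * S (Λ.s p) ≠ 0 := by
  intro h
  refine hap ?_
  calc a * S p = S p * (S (Λ.s p) * a) := by rw [hcen, ← mul_assoc, hf.mul_vertex_source]
    _ = 0 := by rw [← hcen, h, mul_zero]

variable {R : Type*} [Semiring R] [Module R A] [IsScalarTower R A A]
  {F : Finset (Λ.Path × Λ.Path)} {c : Λ.Path × Λ.Path → R}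

theorem sum_smul_mul_ghost_mul_sum_vertex (hf : Λ.IsKPFamily S S') {V : Finset Λ.Path}
    (hV : ∀ v ∈ V, Λ.d v = 0) (hFV : ∀ x ∈ F, Λ.r x.2 ∈ V) :
    (∑ x ∈ F, c x • (S x.1 * S' x.2)) * ∑ v ∈ V, S v = ∑ x ∈ F, c x • (S x.1 * S' x.2) := by
  rw [Finset.sum_mul]
  refine Finset.sum_congr rfl fun x hx => ?_
  rw [Finset.mul_sum, Finset.sum_eq_single_of_mem _ (hFV x hx) fun v hv hne => by
    rw [smul_mul_assoc, mul_assoc, hf.ghost_mul_vertex_of_ne (hV v hv) hne.symm, mul_zero,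
      smul_zero], smul_mul_assoc, mul_assoc, hf.ghost_mul_vertex_range]

theorem exists_vertex_sum_smul_mul_ghost_mul_ne_zero (hf : Λ.IsKPFamily S S')
    (ha : ∑ x ∈ F, c x • (S x.1 * S' x.2) ≠ 0) :
    ∃ v, Λ.d v = 0 ∧ (∑ x ∈ F, c x • (S x.1 * S' x.2)) * S v ≠ 0 := by
  classical
  set V := F.image fun x => Λ.r x.2
  have hV : ∀ v ∈ V, Λ.d v = 0 := by
    simp only [V, Finset.forall_mem_image]
    exact fun x _ => Λ.d_r x.2
  by_contra! h
  refine ha ?_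
  rw [← hf.sum_smul_mul_ghost_mul_sum_vertex hV fun x hx => Finset.mem_image_of_mem _ hx,
    Finset.mul_sum]
  exact Finset.sum_eq_zero fun v hv => h v (hV v hv)

theorem exists_mem_snd_eq_of_sum_smul_mul_ghost_mul_ne_zero (hf : Λ.IsKPFamily S S')
    {p : Λ.Path} (hd : ∀ x ∈ F, Λ.d x.2 = Λ.d p)
    (h : (∑ x ∈ F, c x • (S x.1 * S' x.2)) * S p ≠ 0) : ∃ x ∈ F, x.2 = p := by
  contrapose! h
  rw [Finset.sum_mul]
  refine Finset.sum_eq_zero fun x hx => ?_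
  rw [smul_mul_assoc, mul_assoc, (hf.kp3 _ _ (hd x hx)).2 (h x hx), mul_zero, smul_zero]

end KGraph.IsKPFamily

theorem center_normal_form_closed_path_general
    (Λ : KGraph k) (hrow : Λ.RowFinite)
    (R : Type*) [CommRing R]
    {A : Type*} [NonUnitalRing A] [Module R A] [SMulCommClass R A A]
    [IsScalarTower R A A] {S S' : Λ.Path → A}
    (hKP : IsKumjianPaskAlgebra R Λ A S S')
    (a : A) (ha : a ≠ 0) (hcen : ∀ b : A, a * b = b * a)
    (F : Finset (Λ.Path × Λ.Path)) (c : Λ.Path × Λ.Path → R) (m : Fin k → ℕ)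
    (hdm : ∀ x ∈ F, Λ.d x.2 = m)
    (hnf : a = ∑ x ∈ F, c x • (S x.1 * S' x.2)) :
    ∃ l : ℕ, ∃ hl : 0 < l, ∃ g : Fin l → Λ.Path × Λ.Path,
      (∀ i, g i ∈ F) ∧
      (∀ i : ℕ, ∀ h : i + 1 < l,
        Λ.s (g ⟨i, Nat.lt_of_succ_lt h⟩).2 = Λ.r (g ⟨i + 1, h⟩).2) ∧
      Λ.r (g ⟨0, hl⟩).2 = Λ.s (g ⟨l - 1, Nat.sub_lt hl Nat.one_pos⟩).2 := by
  have hf := hKP.isFamily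
  subst hnf
  obtain ⟨v₀, hv₀, hav₀⟩ := hf.exists_vertex_sum_smul_mul_ghost_mul_ne_zero ha
  refine exists_closed_chain_of_forall_exists_mem
    (r := fun x : Λ.Path × Λ.Path => Λ.r x.2) (s := fun x => Λ.s x.2)
    (P := fun v => Λ.d v = 0 ∧ _ * S v ≠ 0) (fun v ⟨hv, hav⟩ => ?_) ⟨hv₀, hav₀⟩
  obtain ⟨p, hpv, hpm, hap⟩ := hf.exists_path_mul_ne_zero hrow hv m hav
  obtain ⟨x, hxF, rfl⟩ :=
    hf.exists_mem_snd_eq_of_sum_smul_mul_ghost_mul_ne_zero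
      (fun x hx => (hdm x hx).trans hpm.symm) hap
  exact ⟨x, hxF, hpv, Λ.d_s _, hf.mul_vertex_source_ne_zero hcen hap⟩

/-- Let `a` be a nonzero element of the center of `KP_R(Λ)`, written in normal
form `a = ∑_{(α,β) ∈ F} r_{α,β} s_α s_{β*}`.  Then there are `l ≥ 1` and
pairs `(α_1,β_1), …, (α_l,β_l) ∈ F` such that the composition `β_1 β_2 ⋯ β_l`
is defined (consecutive sources and ranges match) and is a closed path, i.e.
the range of `β_1` equals the source of `β_l`. -/
theorem center_normal_form_closed_path
    (Λ : KGraph k) (hrow : Λ.RowFinite) (hsrc : Λ.NoSources)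
    (R : Type*) [CommRing R]
    {A : Type*} [NonUnitalRing A] [Module R A] [SMulCommClass R A A]
    [IsScalarTower R A A] {S S' : Λ.Path → A}
    (hKP : IsKumjianPaskAlgebra R Λ A S S')
    (a : A) (ha : a ≠ 0) (hcen : ∀ b : A, a * b = b * a)
    (F : Finset (Λ.Path × Λ.Path)) (c : Λ.Path × Λ.Path → R) (m : Fin k → ℕ)
    (hdm : ∀ x ∈ F, Λ.d x.2 = m)
    (hss : ∀ x ∈ F, Λ.s x.1 = Λ.s x.2)
    (hc : ∀ x ∈ F, c x ≠ 0)
    (hnf : a = ∑ x ∈ F, c x • (S x.1 * S' x.2)) :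
    ∃ l : ℕ, ∃ hl : 0 < l, ∃ g : Fin l → Λ.Path × Λ.Path,
      (∀ i, g i ∈ F) ∧
      (∀ i : ℕ, ∀ h : i + 1 < l,
        Λ.s (g ⟨i, Nat.lt_of_succ_lt h⟩).2 = Λ.r (g ⟨i + 1, h⟩).2) ∧
      Λ.r (g ⟨0, hl⟩).2 = Λ.s (g ⟨l - 1, Nat.sub_lt hl Nat.one_pos⟩).2 :=
  center_normal_form_closed_path_general Λ hrow R hKP a ha hcen F c m hdm hnf
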